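/- Let R be a commutative F_p-algebra whose Frobenius φ : R → R is flat. Then the class of unit R[F]-modules (those M for which the linearized map F : φ*M → M, i.e., R ⊗_{φ,R} M → M, is an isomorphism) is closed under kernels, cokernels, and extensions in the category of R[F]-modules; in particular it is an abelian subcategory. -/

import Mathlib

open scoped TensorProduct

/-- A copy of `R` viewed as an `R`-algebra via the Frobenius `φ : R → R`, so that
`Rphi p R ⊗[R] M` is the Frobenius base change `φ*M`. -/
def Rphi (_p : ℕ) (R : Type u) : Type u := R

instance Rphi.instCommRing (p : ℕ) (R : Type u) [CommRing R] : CommRing (Rphi p R) :=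
  ‹CommRing R›

noncomputable instance Rphi.instAlgebra (p : ℕ) (R : Type u) [CommRing R] [Fact p.Prime]
    [CharP R p] : Algebra R (Rphi p R) :=
  RingHom.toAlgebra (S := Rphi p R) (frobenius R p)

/-- An `R[F]`-module `(M, F)` (an `R`-module with a Frobenius-semilinear operator `F`) is a
*unit* module if its linearization `φ*M = R ⊗_{φ,R} M → M`, `a ⊗ m ↦ a • F m`, is an
isomorphism.  The linearization is encoded as an additive map `Fs` determined by its values
on pure tensors. -/
def UnitFModule (p : ℕ) (R : Type u) (M : Type v) [Fact p.Prime] [CommRing R] [CharP R p]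
    [AddCommGroup M] [Module R M] (F : M → M) : Prop :=
  ∃ Fs : (Rphi p R) ⊗[R] M →+ M,
    (∀ (a : R) (m : M), Fs ((show Rphi p R from a) ⊗ₜ[R] m) = a • F m) ∧
    Function.Bijective Fs

/-!
The linearization `φ*M → M` is natural in the `R[F]`-module `M`, so applying `φ*` to a kernel,
a cokernel or an extension of `R[F]`-modules yields a commutative ladder whose vertical maps are
linearizations. Since `φ` is flat, `φ*` is exact (and it is right exact in any case), so both rows
are exact and the four and five lemmas carry bijectivity of the outer linearizations to the
remaining one.
-/

structure IsFrobeniusSemilinear (p : ℕ) (R : Type*) {M : Type*} [CommRing R] [AddCommGroup M]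
    [Module R M] (F : M → M) : Prop where
  map_add : ∀ x y, F (x + y) = F x + F y
  map_smul : ∀ (r : R) (x : M), F (r • x) = r ^ p • F x

namespace IsFrobeniusSemilinear

variable {p : ℕ} {R M : Type*} [CommRing R] [AddCommGroup M] [Module R M] {F : M → M}

theorem map_zero (hF : IsFrobeniusSemilinear p R F) : F 0 = 0 :=
  (AddMonoidHom.mk' F hF.map_add).map_zero

theorem map_sub (hF : IsFrobeniusSemilinear p R F) (x y : M) : F (x - y) = F x - F y :=
  (AddMonoidHom.mk' F hF.map_add).map_sub x y

end IsFrobeniusSemilinear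

section InvariantSubmodule

variable {p : ℕ} {R M : Type*} [CommRing R] [AddCommGroup M] [Module R M]
  (F : M → M) (P : Submodule R M)

def Submodule.restrictOp (hP : ∀ x ∈ P, F x ∈ P) : P → P :=
  fun x => ⟨F x, hP x x.2⟩

def Submodule.quotientOp (hF : IsFrobeniusSemilinear p R F) (hP : ∀ x ∈ P, F x ∈ P) :
    M ⧸ P → M ⧸ P :=
  Quotient.map' F fun x y hxy => by
    rw [Submodule.quotientRel_def] at hxy ⊢
    rw [← hF.map_sub]
    exact hP _ hxy

variable {F P}

theorem IsFrobeniusSemilinear.restrictOp (hF : IsFrobeniusSemilinear p R F)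
    (hP : ∀ x ∈ P, F x ∈ P) : IsFrobeniusSemilinear p R (P.restrictOp F hP) where
  map_add x y := Subtype.ext (hF.map_add x y)
  map_smul r x := Subtype.ext (hF.map_smul r x)

theorem IsFrobeniusSemilinear.quotientOp (hF : IsFrobeniusSemilinear p R F)
    (hP : ∀ x ∈ P, F x ∈ P) : IsFrobeniusSemilinear p R (P.quotientOp F hF hP) where
  map_add x y := by
    induction x using Submodule.Quotient.induction_on
    induction y using Submodule.Quotient.induction_on
    exact congrArg (Submodule.Quotient.mk (p := P)) (hF.map_add _ _)
  map_smul r x := by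
    induction x using Submodule.Quotient.induction_on
    exact congrArg (Submodule.Quotient.mk (p := P)) (hF.map_smul _ _)

end InvariantSubmodule

theorem TensorProduct.addMonoidHom_ext {R M N P : Type*} [CommSemiring R] [AddCommMonoid M]
    [AddCommMonoid N] [AddCommMonoid P] [Module R M] [Module R N] {f g : M ⊗[R] N →+ P}
    (h : ∀ m n, f (m ⊗ₜ n) = g (m ⊗ₜ n)) : f = g := by
  ext t
  induction t using TensorProduct.induction_on with
  | zero => simp only [map_zero]
  | tmul m n => exact h m n
  | add x y hx hy => rw [map_add, map_add, hx, hy]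

section Linearization

variable {p : ℕ} [Fact p.Prime] {R : Type u} [CommRing R] [CharP R p]
  {M : Type*} [AddCommGroup M] [Module R M] {F : M → M}

noncomputable def linearization (hF : IsFrobeniusSemilinear p R F) : Rphi p R ⊗[R] M →+ M :=
  TensorProduct.liftAddHom ((smulAddHom R M).compl₂ (AddMonoidHom.mk' F hF.map_add))
    fun r a m => by
      change (r ^ p * (show R from a)) • F m = (show R from a) • F (r • m)
      rw [hF.map_smul, mul_smul, smul_comm]

theorem linearization_tmul (hF : IsFrobeniusSemilinear p R F) (a : R) (m : M) :
    linearization hF ((show Rphi p R from a) ⊗ₜ[R] m) = a • F m :=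
  TensorProduct.liftAddHom_tmul _ _ _ _

theorem unitFModule_iff_bijective_linearization (hF : IsFrobeniusSemilinear p R F) :
    UnitFModule p R M F ↔ Function.Bijective (linearization hF) := by
  refine ⟨fun ⟨Fs, hFs, hbij⟩ => ?_, fun h => ⟨_, linearization_tmul hF, h⟩⟩
  convert hbij
  exact TensorProduct.addMonoidHom_ext fun a m => (linearization_tmul hF a m).trans (hFs a m).symm

variable {N : Type*} [AddCommGroup N] [Module R N] {G : N → N}

theorem linearization_comp_lTensor (hF : IsFrobeniusSemilinear p R F)
    (hG : IsFrobeniusSemilinear p R G) (g : M →ₗ[R] N) (hg : ∀ x, g (F x) = G (g x)) :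
    g.toAddMonoidHom.comp (linearization hF)
      = (linearization hG).comp (g.lTensor (Rphi p R)).toAddMonoidHom := by
  refine TensorProduct.addMonoidHom_ext fun (a : R) m => ?_
  have hgF := congrArg g (linearization_tmul hF a m)
  rw [map_smul, hg] at hgF
  exact hgF.trans (linearization_tmul hG a (g m)).symm

end Linearization

section Closure

variable {p : ℕ} [Fact p.Prime] {R : Type u} [CommRing R] [CharP R p]
  {A B C : Type*} [AddCommGroup A] [Module R A] [AddCommGroup B] [Module R B]
  [AddCommGroup C] [Module R C] {FA : A → A} {FB : B → B} {FC : C → C}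
  {f : A →ₗ[R] B} {g : B →ₗ[R] C}

theorem UnitFModule.of_leftExact [Module.Flat R (Rphi p R)]
    (hFA : IsFrobeniusSemilinear p R FA) (hFB : IsFrobeniusSemilinear p R FB)
    (hFC : IsFrobeniusSemilinear p R FC)
    (hfF : ∀ x, f (FA x) = FB (f x)) (hgF : ∀ x, g (FB x) = FC (g x))
    (hf : Function.Injective f) (hfg : Function.Exact f g)
    (hB : UnitFModule p R B FB) (hC : UnitFModule p R C FC) : UnitFModule p R A FA := by
  rw [unitFModule_iff_bijective_linearization hFB] at hB
  rw [unitFModule_iff_bijective_linearization hFC] at hC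
  rw [unitFModule_iff_bijective_linearization hFA]
  exact AddMonoidHom.bijective_of_bijective_of_injective_of_left_exact _ _ _ _ _ _ _
    (linearization_comp_lTensor hFA hFB f hfF) (linearization_comp_lTensor hFB hFC g hgF)
    (Module.Flat.lTensor_exact _ hfg) hfg hB hC.1
    (Module.Flat.lTensor_preserves_injective_linearMap f hf) hf

theorem UnitFModule.of_rightExact
    (hFA : IsFrobeniusSemilinear p R FA) (hFB : IsFrobeniusSemilinear p R FB)
    (hFC : IsFrobeniusSemilinear p R FC)
    (hfF : ∀ x, f (FA x) = FB (f x)) (hgF : ∀ x, g (FB x) = FC (g x))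
    (hfg : Function.Exact f g) (hg : Function.Surjective g)
    (hA : UnitFModule p R A FA) (hB : UnitFModule p R B FB) : UnitFModule p R C FC := by
  rw [unitFModule_iff_bijective_linearization hFA] at hA
  rw [unitFModule_iff_bijective_linearization hFB] at hB
  rw [unitFModule_iff_bijective_linearization hFC]
  exact AddMonoidHom.bijective_of_surjective_of_bijective_of_right_exact _ _ _ _ _ _ _
    (linearization_comp_lTensor hFA hFB f hfF) (linearization_comp_lTensor hFB hFC g hgF)
    (lTensor_exact _ hfg hg) hfg hA.2 hB (LinearMap.lTensor_surjective _ hg) hg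

theorem UnitFModule.of_shortExact [Module.Flat R (Rphi p R)]
    (hFA : IsFrobeniusSemilinear p R FA) (hFB : IsFrobeniusSemilinear p R FB)
    (hFC : IsFrobeniusSemilinear p R FC)
    (hfF : ∀ x, f (FA x) = FB (f x)) (hgF : ∀ x, g (FB x) = FC (g x))
    (hf : Function.Injective f) (hfg : Function.Exact f g) (hg : Function.Surjective g)
    (hA : UnitFModule p R A FA) (hC : UnitFModule p R C FC) : UnitFModule p R B FB := by
  rw [unitFModule_iff_bijective_linearization hFA] at hA
  rw [unitFModule_iff_bijective_linearization hFC] at hC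
  rw [unitFModule_iff_bijective_linearization hFB]
  -- the five lemma for the ladder from `0 → φ*A → φ*B → φ*C → 0` to `0 → A → B → C → 0`
  exact AddMonoidHom.bijective_of_surjective_of_bijective_of_bijective_of_injective
    (0 : Unit →ₗ[R] Rphi p R ⊗[R] A).toAddMonoidHom _ _
    (0 : Rphi p R ⊗[R] C →ₗ[R] Unit).toAddMonoidHom
    (0 : Unit →ₗ[R] A).toAddMonoidHom _ _ (0 : C →ₗ[R] Unit).toAddMonoidHom 0 _ _ _ 0
    (by ext; simp) (linearization_comp_lTensor hFA hFB f hfF)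
    (linearization_comp_lTensor hFB hFC g hgF) (by ext)
    ((LinearMap.exact_zero_iff_injective _ _).mpr
      (Module.Flat.lTensor_preserves_injective_linearMap f hf))
    (Module.Flat.lTensor_exact _ hfg)
    ((LinearMap.exact_zero_iff_surjective _ _).mpr (LinearMap.lTensor_surjective _ hg))
    ((LinearMap.exact_zero_iff_injective _ _).mpr hf) hfg
    ((LinearMap.exact_zero_iff_surjective _ _).mpr hg)
    (fun _ => ⟨0, rfl⟩) hA hC fun _ _ _ => rfl

end Closure

/-- Let `R` be a commutative `F_p`-algebra whose Frobenius `φ` is flat.  Then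
the class of unit `R[F]`-modules is closed under kernels, cokernels, and extensions in the
category of `R[F]`-modules.  Here an `R[F]`-module is an `R`-module with an additive,
Frobenius-semilinear operator; morphisms are `R`-linear maps commuting with the operators.

The first conjunct (kernels) and second conjunct (cokernels) refer to a morphism
`g : M → N` of unit modules; the third conjunct (extensions) refers to a short exact
sequence `0 → A → B → C → 0` of `R[F]`-modules with `A` and `C` unit, concluding that `B`
is unit. -/
theorem stmt12 (p : ℕ) [Fact p.Prime] (R : Type u) [CommRing R] [CharP R p]
    [Module.Flat R (Rphi p R)]
    (M N : Type u) [AddCommGroup M] [Module R M] [AddCommGroup N] [Module R N]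
    (FM : M → M) (FN : N → N)
    (hFMadd : ∀ x y, FM (x + y) = FM x + FM y)
    (hFMsemi : ∀ (r : R) (x : M), FM (r • x) = r ^ p • FM x)
    (hFNadd : ∀ x y, FN (x + y) = FN x + FN y)
    (hFNsemi : ∀ (r : R) (x : N), FN (r • x) = r ^ p • FN x)
    (hM : UnitFModule p R M FM) (hN : UnitFModule p R N FN)
    (g : M →ₗ[R] N) (hg : ∀ x, g (FM x) = FN (g x))
    (A B C : Type u) [AddCommGroup A] [Module R A] [AddCommGroup B] [Module R B]
    [AddCommGroup C] [Module R C]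
    (FA : A → A) (FB : B → B) (FC : C → C)
    (hFAadd : ∀ x y, FA (x + y) = FA x + FA y)
    (hFAsemi : ∀ (r : R) (x : A), FA (r • x) = r ^ p • FA x)
    (hFBadd : ∀ x y, FB (x + y) = FB x + FB y)
    (hFBsemi : ∀ (r : R) (x : B), FB (r • x) = r ^ p • FB x)
    (hFCadd : ∀ x y, FC (x + y) = FC x + FC y)
    (hFCsemi : ∀ (r : R) (x : C), FC (r • x) = r ^ p • FC x)
    (f : A →ₗ[R] B) (q : B →ₗ[R] C)
    (hfF : ∀ x, f (FA x) = FB (f x)) (hqF : ∀ x, q (FB x) = FC (q x))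
    (hfinj : Function.Injective f) (hqsurj : Function.Surjective q)
    (hexact : ∀ b : B, q b = 0 ↔ b ∈ LinearMap.range f)
    (hA : UnitFModule p R A FA) (hC : UnitFModule p R C FC) :
    (∃ FK : ↥(LinearMap.ker g) → ↥(LinearMap.ker g),
      (∀ x : ↥(LinearMap.ker g), (FK x : M) = FM (x : M)) ∧
      UnitFModule p R ↥(LinearMap.ker g) FK) ∧
    (∃ FQ : (N ⧸ LinearMap.range g) → (N ⧸ LinearMap.range g),
      (∀ y : N, FQ (Submodule.Quotient.mk y) = Submodule.Quotient.mk (FN y)) ∧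
      UnitFModule p R (N ⧸ LinearMap.range g) FQ) ∧
    UnitFModule p R B FB := by
  have hMF : IsFrobeniusSemilinear p R FM := ⟨hFMadd, hFMsemi⟩
  have hNF : IsFrobeniusSemilinear p R FN := ⟨hFNadd, hFNsemi⟩
  have hker : ∀ x ∈ LinearMap.ker g, FM x ∈ LinearMap.ker g := fun x hx => by
    rw [LinearMap.mem_ker, hg, LinearMap.mem_ker.mp hx, hNF.map_zero]
  have hrange : ∀ y ∈ LinearMap.range g, FN y ∈ LinearMap.range g := by
    rintro _ ⟨x, rfl⟩
    exact ⟨FM x, hg x⟩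
  refine ⟨⟨(LinearMap.ker g).restrictOp FM hker, fun _ => rfl, ?_⟩,
    ⟨(LinearMap.range g).quotientOp FN hNF hrange, fun _ => rfl, ?_⟩, ?_⟩
  · exact UnitFModule.of_leftExact (hMF.restrictOp hker) hMF hNF (fun _ => rfl) hg
      (Submodule.injective_subtype _) (LinearMap.exact_subtype_ker_map g) hM hN
  · exact UnitFModule.of_rightExact hMF hNF (hNF.quotientOp hrange) hg (fun _ => rfl)
      (LinearMap.exact_map_mkQ_range g) (Submodule.mkQ_surjective _) hM hN
  · exact UnitFModule.of_shortExact ⟨hFAadd, hFAsemi⟩ ⟨hFBadd, hFBsemi⟩ ⟨hFCadd, hFCsemi⟩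
      hfF hqF hfinj hexact hqsurj hA hC
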